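/- For every integer k ≥ 2, every L-product in C_{k−1}^{(k)} is a cycle: D(P) = 0 for every L-product P. In particular, L_k is contained in the kernel of D: C_{k−1}^{(k)} → C_{k−2}^{(k)}. -/

import Mathlib

noncomputable section

/-- The free associative `R`-algebra on noncommuting generators labelled by `Fin k`,
realized as the monoid algebra on the free monoid. -/
abbrev FA (R : Type) [CommRing R] (k : ℕ) : Type := MonoidAlgebra R (FreeMonoid (Fin k))

/-- A word in the letters `Fin k`, as an element of the free associative algebra. -/
def wordElem (R : Type) [CommRing R] (k : ℕ) (w : List (Fin k)) : FA R k :=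
  MonoidAlgebra.single (FreeMonoid.ofList w) 1

/-- `C_{n-1}^{(k)}`: the free `R`-submodule spanned by the injective words of length `n`. -/
def wordsLen (R : Type) [CommRing R] (k n : ℕ) : Submodule R (FA R k) :=
  Submodule.span R {x | ∃ w : List (Fin k), w.Nodup ∧ w.length = n ∧ x = wordElem R k w}

/-- Alternating sum of letter deletions of a single word. -/
def Dword (R : Type) [CommRing R] (k : ℕ) (w : List (Fin k)) : FA R k :=
  ∑ j : Fin w.length, ((-1 : R) ^ (j : ℕ)) • wordElem R k (w.eraseIdx (j : ℕ))

/-- The differential `D`, extended linearly to the whole free algebra. -/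
def Ddiff (R : Type) [CommRing R] (k : ℕ) : FA R k →ₗ[R] FA R k :=
  (Finsupp.lsum R fun w : FreeMonoid (Fin k) =>
    LinearMap.toSpanSingleton R (FA R k) (Dword R k (FreeMonoid.toList w)))
  ∘ₗ (MonoidAlgebra.coeffLinearEquiv R).toLinearMap

/-- `IsLie R k S x`: `x` is an iterated graded Lie bracket of the letters of `S`, every
letter of `S` appearing exactly once.  Here `[p, q] = pq - (-1)^(|p||q|) qp`. -/
inductive IsLie (R : Type) [CommRing R] (k : ℕ) : Finset (Fin k) → FA R k → Prop
  | letter (a : Fin k) : IsLie R k {a} (wordElem R k [a])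
  | bracket {S T : Finset (Fin k)} {p q : FA R k} (hST : Disjoint S T)
      (hp : IsLie R k S p) (hq : IsLie R k T q) :
      IsLie R k (S ∪ T) (p * q - ((-1 : R) ^ (S.card * T.card)) • (q * p))

/-- An `L`-product: a product `P₁ ⋯ P_m` over a set partition `[k] = S₁ ⊔ ⋯ ⊔ S_m`
with each `P i` in the submodule `L_{S i}` (so every block has at least two elements). -/
def IsLProduct (R : Type) [CommRing R] (k : ℕ) (x : FA R k) : Prop :=
  ∃ (m : ℕ) (S : Fin m → Finset (Fin k)) (P : Fin m → FA R k),
    (∀ i, 2 ≤ (S i).card) ∧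
    (∀ i, P i ∈ Submodule.span R {y : FA R k | IsLie R k (S i) y}) ∧
    (∀ i j, i ≠ j → Disjoint (S i) (S j)) ∧
    Finset.univ.biUnion S = (Finset.univ : Finset (Fin k)) ∧
    x = (List.ofFn P).prod

/-!
`D` is a graded derivation of degree `-1`: `D (x * y) = D x * y + (-1)^|x| • x * D y` for `x`
homogeneous, and `D a = 1` for every letter `a`. Hence for a bracket `[p, q]` of Lie elements
`D [p, q]` is built from `D p` and `D q`, and induction on the bracket shows that `D` vanishes
on every Lie element with at least two letters. The Leibniz rule then kills every product of
homogeneous cycles, in particular every `L`-product.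
-/

section

variable {R : Type} [CommRing R] {k : ℕ}

def homogeneous (R : Type) [CommRing R] (k n : ℕ) : Submodule R (FA R k) :=
  Submodule.span R {x | ∃ w : List (Fin k), w.length = n ∧ x = wordElem R k w}

lemma wordElem_mul_wordElem (u v : List (Fin k)) :
    wordElem R k u * wordElem R k v = wordElem R k (u ++ v) := by
  simp [wordElem, MonoidAlgebra.single_mul_single]

lemma wordElem_nil : wordElem R k [] = 1 := rfl

lemma wordElem_mem_homogeneous (w : List (Fin k)) : wordElem R k w ∈ homogeneous R k w.length :=
  Submodule.subset_span ⟨w, rfl, rfl⟩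

lemma mul_mem_homogeneous {n m : ℕ} {x y : FA R k} (hx : x ∈ homogeneous R k n)
    (hy : y ∈ homogeneous R k m) : x * y ∈ homogeneous R k (n + m) := by
  suffices homogeneous R k n * homogeneous R k m ≤ homogeneous R k (n + m) from
    this (Submodule.mul_mem_mul hx hy)
  rw [homogeneous, homogeneous, Submodule.span_mul_span, Submodule.span_le]
  rintro _ ⟨_, ⟨u, rfl, rfl⟩, _, ⟨v, rfl, rfl⟩, rfl⟩
  simpa [wordElem_mul_wordElem] using wordElem_mem_homogeneous (R := R) (u ++ v)

lemma Ddiff_wordElem (w : List (Fin k)) : Ddiff R k (wordElem R k w) = Dword R k w := by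
  rw [Ddiff, wordElem, LinearMap.comp_apply, LinearEquiv.coe_coe,
    MonoidAlgebra.coeffLinearEquiv_apply, MonoidAlgebra.coeff_single]
  erw [Finsupp.lsum_single]
  simp [LinearMap.toSpanSingleton_apply]

lemma Dword_nil : Dword R k [] = 0 := by simp [Dword]

lemma Dword_cons (a : Fin k) (w : List (Fin k)) :
    Dword R k (a :: w) = wordElem R k w - wordElem R k [a] * Dword R k w := by
  rw [Dword, List.length_cons, Fin.sum_univ_succ, sub_eq_add_neg, Dword, Finset.mul_sum,
    ← Finset.sum_neg_distrib]
  simp only [Fin.val_zero, pow_zero, one_smul, Fin.val_succ, List.eraseIdx_cons_zero,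
    List.eraseIdx_cons_succ]
  congr 1
  refine Finset.sum_congr rfl fun i _ => ?_
  rw [← List.singleton_append, ← wordElem_mul_wordElem, pow_succ, mul_smul, neg_one_smul,
    smul_neg, mul_smul_comm]

lemma Dword_append (u v : List (Fin k)) :
    Dword R k (u ++ v) =
      Dword R k u * wordElem R k v + ((-1 : R) ^ u.length) • (wordElem R k u * Dword R k v) := by
  induction u with
  | nil => simp [Dword_nil, wordElem_nil]
  | cons a u ih =>
      rw [List.cons_append, Dword_cons, ih, Dword_cons, ← wordElem_mul_wordElem,
        List.length_cons, pow_succ, show a :: u = [a] ++ u from rfl, ← wordElem_mul_wordElem]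
      simp only [mul_smul, neg_one_smul, sub_mul, smul_neg, mul_add, mul_smul_comm,
        mul_assoc]
      abel

lemma Ddiff_wordElem_mul (u : List (Fin k)) (y : FA R k) :
    Ddiff R k (wordElem R k u * y) =
      Dword R k u * y + ((-1 : R) ^ u.length) • (wordElem R k u * Ddiff R k y) := by
  induction y using MonoidAlgebra.induction_linear with
  | zero => simp
  | add f g hf hg =>
      simp only [mul_add, map_add, hf, hg, smul_add]
      abel
  | single v r =>
      have hv : (MonoidAlgebra.single v r : FA R k) = r • wordElem R k v.toList := by
        rw [wordElem, MonoidAlgebra.smul_single', mul_one]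
        rfl
      rw [hv, mul_smul_comm, map_smul, map_smul, wordElem_mul_wordElem, Ddiff_wordElem,
        Ddiff_wordElem, Dword_append]
      simp only [smul_add, mul_smul_comm, smul_comm r]

theorem Ddiff_mul_of_mem_homogeneous {n : ℕ} {x : FA R k} (hx : x ∈ homogeneous R k n)
    (y : FA R k) : Ddiff R k (x * y) = Ddiff R k x * y + ((-1 : R) ^ n) • (x * Ddiff R k y) := by
  induction hx using Submodule.span_induction with
  | mem z hz =>
      obtain ⟨w, rfl, rfl⟩ := hz
      rw [Ddiff_wordElem_mul, Ddiff_wordElem]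
  | zero => simp
  | add a b _ _ ha hb =>
      simp only [add_mul, map_add, ha, hb, smul_add]
      abel
  | smul r a _ ha =>
      rw [smul_mul_assoc, map_smul, ha, map_smul, smul_add, smul_mul_assoc, smul_mul_assoc,
        smul_comm]

lemma Ddiff_one : Ddiff R k (1 : FA R k) = 0 := by
  rw [← wordElem_nil, Ddiff_wordElem, Dword_nil]

theorem Ddiff_list_prod_eq_zero (l : List (FA R k))
    (h : ∀ x ∈ l, (∃ n, x ∈ homogeneous R k n) ∧ Ddiff R k x = 0) : Ddiff R k l.prod = 0 := by
  induction l with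
  | nil => exact Ddiff_one
  | cons a l ih =>
      obtain ⟨⟨n, hn⟩, hDa⟩ := h a List.mem_cons_self
      rw [List.prod_cons, Ddiff_mul_of_mem_homogeneous hn, hDa,
        ih fun x hx => h x (List.mem_cons_of_mem a hx)]
      simp

namespace IsLie

variable {S : Finset (Fin k)} {x : FA R k}

lemma one_le_card (h : IsLie R k S x) : 1 ≤ S.card := by
  induction h with
  | letter a => simp
  | bracket hST _ _ ihp ihq =>
      rw [Finset.card_union_of_disjoint hST]
      omega

lemma mem_homogeneous (h : IsLie R k S x) : x ∈ homogeneous R k S.card := by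
  induction h with
  | letter a => exact wordElem_mem_homogeneous [a]
  | bracket hST _ _ ihp ihq =>
      rw [Finset.card_union_of_disjoint hST]
      exact sub_mem (mul_mem_homogeneous ihp ihq)
        (Submodule.smul_mem _ _ (by rw [add_comm]; exact mul_mem_homogeneous ihq ihp))

lemma Ddiff_eq (h : IsLie R k S x) : Ddiff R k x = if S.card = 1 then 1 else 0 := by
  induction h with
  | letter a => simp [Ddiff_wordElem, Dword, wordElem_nil]
  | @bracket S T p q hST hp hq ihp ihq =>
      have hS := hp.one_le_card
      have hT := hq.one_le_card
      rw [Finset.card_union_of_disjoint hST, if_neg (by omega), map_sub, map_smul,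
        Ddiff_mul_of_mem_homogeneous hp.mem_homogeneous,
        Ddiff_mul_of_mem_homogeneous hq.mem_homogeneous, ihp, ihq]
      -- only terms with a one-letter factor survive, and they cancel in pairs
      rcases hS.eq_or_lt with hS | hS <;> rcases hT.eq_or_lt with hT | hT
      · simp [← hS, ← hT]
        abel
      · simp [← hS, hT.ne', smul_smul, ← pow_add]
      · simp [← hT, hS.ne']
      · simp [hS.ne', hT.ne']

end IsLie

lemma mem_homogeneous_of_mem_span_isLie {S : Finset (Fin k)} {x : FA R k}
    (hx : x ∈ Submodule.span R {y : FA R k | IsLie R k S y}) : x ∈ homogeneous R k S.card :=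
  Submodule.span_le.2 (fun _ hy => IsLie.mem_homogeneous hy) hx

theorem Ddiff_eq_zero_of_mem_span_isLie {S : Finset (Fin k)} (hS : S.card ≠ 1) {x : FA R k}
    (hx : x ∈ Submodule.span R {y : FA R k | IsLie R k S y}) : Ddiff R k x = 0 := by
  suffices Submodule.span R {y : FA R k | IsLie R k S y} ≤ LinearMap.ker (Ddiff R k) from this hx
  rw [Submodule.span_le]
  intro y hy
  simp [hy.Ddiff_eq, hS]

end

/-- Every `L`-product in `C_{k-1}^{(k)}` is a cycle; in particular `L_k ⊆ ker D`. -/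
theorem LProducts_are_cycles (k : ℕ) (hk : 2 ≤ k) :
    (∀ x : FA ℤ k, IsLProduct ℤ k x → Ddiff ℤ k x = 0) ∧
    Submodule.span ℤ {x : FA ℤ k | IsLie ℤ k Finset.univ x} ≤ LinearMap.ker (Ddiff ℤ k) := by
  refine ⟨?_, fun x hx => Ddiff_eq_zero_of_mem_span_isLie (by simp; omega) hx⟩
  rintro _ ⟨m, S, P, hcard, hP, -, -, rfl⟩
  refine Ddiff_list_prod_eq_zero _ fun y hy => ?_
  obtain ⟨i, rfl⟩ := List.mem_ofFn.1 hy
  exact ⟨⟨_, mem_homogeneous_of_mem_span_isLie (hP i)⟩,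
    Ddiff_eq_zero_of_mem_span_isLie (by have := hcard i; omega) (hP i)⟩
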